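/- For every q ∈ ℝ³ with q ≠ 0, the screened Coulomb Fourier integrals converge to the Coulomb value as the screening parameter tends to zero: the function λ ↦ ∫_{ℝ³} (exp(−λ‖x‖)/‖x‖) · exp(−i⟪q,x⟫) dx tends to 4π/‖q‖² as λ → 0 from the right (along the filter 𝓝[>] 0). -/

import Mathlib

/-!
Rotating `q` onto `‖q‖ e₀` and writing `ℝ³ = ℝ × ℝ²`, the integral at a fixed first coordinate
`z` is computed in polar coordinates: `∫_{ℝ²} e^{-λ√(z²+|y|²)} / √(z²+|y|²) dy = 2π e^{-λ|z|} / λ`,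
since `-e^{-λ√(z²+r²)} / λ` is an antiderivative of `r e^{-λ√(z²+r²)} / √(z²+r²)`. The remaining
one-dimensional Fourier transform of `e^{-λ|z|}` is `2λ / (λ² + k²)`. So for every `λ > 0` the
integral equals `4π / (λ² + ‖q‖²)`, which is continuous at `λ = 0` when `q ≠ 0`.
-/

open MeasureTheory Filter Set
open scoped RealInnerProductSpace

lemma integrable_exp_neg_mul_abs {l : ℝ} (hl : 0 < l) :
    Integrable fun z : ℝ => Real.exp (-(l * |z|)) := by
  rw [← integrableOn_univ, ← Iic_union_Ioi (a := 0)]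
  refine IntegrableOn.union ((integrableOn_exp_mul_Iic hl 0).congr_fun (fun z hz => ?_)
    measurableSet_Iic) ((integrableOn_exp_mul_Ioi (neg_neg_of_pos hl) 0).congr_fun
    (fun z hz => ?_) measurableSet_Ioi)
  · rw [abs_of_nonpos hz, mul_neg, neg_neg]
  · simp only [abs_of_pos (show 0 < z from hz), neg_mul]

lemma integral_exp_neg_mul_abs_mul_cexp {l : ℝ} (hl : 0 < l) (k : ℝ) :
    ∫ z : ℝ, (Real.exp (-(l * |z|)) : ℂ) * Complex.exp (-(Complex.I * (k * z)))
      = 2 * l / (l ^ 2 + k ^ 2) := by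
  set f : ℝ → ℂ := fun z => (Real.exp (-(l * |z|)) : ℂ) * Complex.exp (-(Complex.I * (k * z)))
  have hIic : EqOn f (fun z : ℝ => Complex.exp ((l - Complex.I * k) * z)) (Iic 0) := by
    intro z hz
    simp only [f, abs_of_nonpos (show z ≤ 0 from hz), Complex.ofReal_exp, ← Complex.exp_add]
    push_cast
    ring_nf
  have hIoi : EqOn f (fun z : ℝ => Complex.exp (-(l + Complex.I * k) * z)) (Ioi 0) := by
    intro z hz
    simp only [f, abs_of_pos (show 0 < z from hz), Complex.ofReal_exp, ← Complex.exp_add]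
    push_cast
    ring_nf
  have hre₁ : 0 < ((l : ℂ) - Complex.I * k).re := by simpa using hl
  have hre₂ : (-((l : ℂ) + Complex.I * k)).re < 0 := by simpa using hl
  rw [← intervalIntegral.integral_Iic_add_Ioi
    ((integrableOn_exp_mul_complex_Iic hre₁ 0).congr_fun hIic.symm measurableSet_Iic)
    ((integrableOn_exp_mul_complex_Ioi hre₂ 0).congr_fun hIoi.symm measurableSet_Ioi),
    setIntegral_congr_fun measurableSet_Iic hIic, setIntegral_congr_fun measurableSet_Ioi hIoi,
    integral_exp_mul_complex_Iic hre₁, integral_exp_mul_complex_Ioi hre₂]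
  have h₁ : (l : ℂ) - Complex.I * k ≠ 0 := fun h => hre₁.ne' (by rw [h, Complex.zero_re])
  have h₂ : (l : ℂ) + Complex.I * k ≠ 0 := fun h => hre₂.ne (by rw [h, neg_zero, Complex.zero_re])
  have hprod : ((l : ℂ) - Complex.I * k) * (l + Complex.I * k) = l ^ 2 + k ^ 2 := by
    ring_nf; rw [Complex.I_sq]; ring
  rw [← hprod, Complex.ofReal_zero, mul_zero, mul_zero, Complex.exp_zero]
  field_simp
  ring

noncomputable def screenedCoulomb (l r : ℝ) : ℝ := Real.exp (-(l * r)) / r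

lemma integral_Ioi_mul_screenedCoulomb_sqrt {l : ℝ} (hl : 0 < l) (c : ℝ) :
    ∫ r in Ioi 0, r * screenedCoulomb l √(c ^ 2 + r ^ 2) = Real.exp (-(l * |c|)) / l := by
  have hderiv : ∀ r ∈ Ioi (0 : ℝ), HasDerivAt (fun r => -(Real.exp (-(l * √(c ^ 2 + r ^ 2))) / l))
      (r * screenedCoulomb l √(c ^ 2 + r ^ 2)) r := by
    intro r (hr : 0 < r)
    have hpos : c ^ 2 + r ^ 2 ≠ 0 := by positivity
    have := ((((hasDerivAt_pow 2 r).const_add (c ^ 2)).sqrt hpos).const_mul l).fun_neg.exp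
      |>.div_const l |>.fun_neg
    refine this.congr_deriv ?_
    rw [screenedCoulomb]
    field_simp
    norm_num [mul_comm]
  have hlim : Tendsto (fun r => -(Real.exp (-(l * √(c ^ 2 + r ^ 2))) / l)) atTop (nhds 0) := by
    have hsqrt : Tendsto (fun r : ℝ => √(c ^ 2 + r ^ 2)) atTop atTop :=
      Real.tendsto_sqrt_atTop.comp
        (tendsto_atTop_add_const_left _ _ (tendsto_pow_atTop two_ne_zero))
    simpa using ((Real.tendsto_exp_atBot.comp
      (tendsto_neg_atTop_atBot.comp (hsqrt.const_mul_atTop hl))).div_const l).neg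
  rw [integral_Ioi_of_hasDerivAt_of_nonneg (by fun_prop) hderiv
    (fun r (hr : 0 < r) => by unfold screenedCoulomb; positivity) hlim]
  simp [Real.sqrt_sq_eq_abs]

lemma integral_comp_sq_add_sq {E : Type*} [NormedAddCommGroup E] [NormedSpace ℝ E] (f : ℝ → E) :
    ∫ y : ℝ × ℝ, f (y.1 ^ 2 + y.2 ^ 2) = (2 * Real.pi) • ∫ r in Ioi 0, r • f (r ^ 2) := by
  rw [← integral_comp_polarCoord_symm, polarCoord_target, Measure.volume_eq_prod,
    ← Measure.prod_restrict]
  simp only [polarCoord_symm_apply, mul_pow, ← mul_add, Real.cos_sq_add_sin_sq, mul_one]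
  rw [integral_fun_fst (f := fun r => r • f (r ^ 2)), measureReal_def,
    Measure.restrict_apply_univ, Real.volume_Ioo, ENNReal.toReal_ofReal (by linarith [Real.pi_pos])]
  ring_nf

lemma integral_screenedCoulomb_sqrt_sq_add {l : ℝ} (hl : 0 < l) (c : ℝ) :
    ∫ y : ℝ × ℝ, screenedCoulomb l √(c ^ 2 + (y.1 ^ 2 + y.2 ^ 2))
      = 2 * Real.pi * (Real.exp (-(l * |c|)) / l) := by
  simp only [integral_comp_sq_add_sq (fun s => screenedCoulomb l √(c ^ 2 + s)), smul_eq_mul,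
    integral_Ioi_mul_screenedCoulomb_sqrt hl]

lemma integral_prod_screenedCoulomb_mul_cexp {l : ℝ} (hl : 0 < l) (k : ℝ) :
    ∫ p : ℝ × ℝ × ℝ, (screenedCoulomb l √(p.1 ^ 2 + (p.2.1 ^ 2 + p.2.2 ^ 2)) : ℂ)
        * Complex.exp (-(Complex.I * (k * p.1)))
      = ((4 * Real.pi / (l ^ 2 + k ^ 2) : ℝ) : ℂ) := by
  set g : ℝ → ℝ × ℝ → ℝ := fun z y => screenedCoulomb l √(z ^ 2 + (y.1 ^ 2 + y.2 ^ 2))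
  have hslice (z : ℝ) : ∫ y, g z y = 2 * Real.pi * (Real.exp (-(l * |z|)) / l) :=
    integral_screenedCoulomb_sqrt_sq_add hl z
  -- a nonzero Bochner integral forces integrability
  have hslice_int (z : ℝ) : Integrable (g z) :=
    Integrable.of_integral_ne_zero (by rw [hslice]; positivity)
  have hnorm (z : ℝ) (y : ℝ × ℝ) :
      ‖(g z y : ℂ) * Complex.exp (-(Complex.I * (k * z)))‖ = g z y := by
    rw [norm_mul, Complex.norm_exp, Complex.norm_real, Real.norm_of_nonneg
      (by unfold g screenedCoulomb; positivity)]
    simp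
  have hint : Integrable
      (fun p : ℝ × ℝ × ℝ => (g p.1 p.2 : ℂ) * Complex.exp (-(Complex.I * (k * p.1))))
      (volume.prod volume) := by
    rw [integrable_prod_iff (by unfold g screenedCoulomb; fun_prop)]
    refine ⟨ae_of_all _ fun z =>
      (hslice_int z).ofReal.mul_const (Complex.exp (-(Complex.I * (k * z)))), ?_⟩
    simp_rw [hnorm, hslice]
    exact ((integrable_exp_neg_mul_abs hl).div_const l).const_mul _
  rw [Measure.volume_eq_prod, integral_prod _ hint]
  simp only [integral_mul_const, integral_complex_ofReal, hslice]
  have hconst (z : ℝ) : ((2 * Real.pi * (Real.exp (-(l * |z|)) / l) : ℝ) : ℂ)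
        * Complex.exp (-(Complex.I * (k * z)))
      = ((2 * Real.pi / l : ℝ) : ℂ) * ((Real.exp (-(l * |z|)) : ℂ)
        * Complex.exp (-(Complex.I * (k * z)))) := by
    push_cast; ring
  simp only [hconst, integral_const_mul, integral_exp_neg_mul_abs_mul_cexp hl]
  have : (l : ℂ) ≠ 0 := by exact_mod_cast hl.ne'
  have : (l : ℂ) ^ 2 + k ^ 2 ≠ 0 := by exact_mod_cast (by positivity : l ^ 2 + k ^ 2 ≠ 0)
  push_cast
  field_simp
  ring

lemma integral_comp_norm_inner_eq_of_norm_eq {E G : Type*} [NormedAddCommGroup E]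
    [InnerProductSpace ℝ E] [FiniteDimensional ℝ E] [MeasurableSpace E] [BorelSpace E]
    [NormedAddCommGroup G] [NormedSpace ℝ G] (f : ℝ → ℝ → G) {q u : E} (h : ‖u‖ = ‖q‖) :
    ∫ x, f ‖x‖ ⟪q, x⟫ = ∫ x, f ‖x‖ ⟪u, x⟫ := by
  set R := Submodule.reflection (ℝ ∙ (u - q))ᗮ
  have hRu : R u = q := Submodule.reflection_sub h
  rw [← R.measurePreserving.integral_comp R.toHomeomorph.measurableEmbedding]
  congr 1 with x
  rw [R.norm_map, ← hRu, R.inner_map_map]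

lemma integral_euclideanSpace_fin_three {G : Type*} [NormedAddCommGroup G] [NormedSpace ℝ G]
    (g : ℝ × ℝ × ℝ → G) :
    ∫ x : EuclideanSpace ℝ (Fin 3), g (x 0, x 1, x 2) = ∫ p, g p := by
  let e : EuclideanSpace ℝ (Fin 3) ≃ᵐ ℝ × ℝ × ℝ :=
    (MeasurableEquiv.toLp 2 _).symm.trans ((MeasurableEquiv.piFinSuccAbove (fun _ => ℝ) 0).trans
      (MeasurableEquiv.prodCongr (MeasurableEquiv.refl ℝ) MeasurableEquiv.finTwoArrow))
  have he : MeasurePreserving e :=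
    (EuclideanSpace.volume_preserving_symm_measurableEquiv_toLp _).trans
      ((volume_preserving_piFinSuccAbove _ 0).trans
        ((MeasurePreserving.id _).prod (volume_preserving_finTwoArrow ℝ)))
  exact he.integral_comp' g

lemma integral_screenedCoulomb_mul_cexp_inner {l : ℝ} (hl : 0 < l)
    (q : EuclideanSpace ℝ (Fin 3)) :
    ∫ x : EuclideanSpace ℝ (Fin 3),
        (screenedCoulomb l ‖x‖ : ℂ) * Complex.exp (-(Complex.I * ⟪q, x⟫))
      = ((4 * Real.pi / (l ^ 2 + ‖q‖ ^ 2) : ℝ) : ℂ) := by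
  have hu : ‖‖q‖ • EuclideanSpace.single (0 : Fin 3) (1 : ℝ)‖ = ‖q‖ := by
    rw [norm_smul, PiLp.norm_single, norm_one, mul_one, norm_norm]
  have hnorm (x : EuclideanSpace ℝ (Fin 3)) : ‖x‖ = √(x 0 ^ 2 + (x 1 ^ 2 + x 2 ^ 2)) := by
    simp [EuclideanSpace.norm_eq, Fin.sum_univ_three, add_assoc]
  rw [integral_comp_norm_inner_eq_of_norm_eq
    (fun r t => (screenedCoulomb l r : ℂ) * Complex.exp (-(Complex.I * t))) hu,
    ← integral_prod_screenedCoulomb_mul_cexp hl,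
    ← integral_euclideanSpace_fin_three]
  congr 1 with x
  simp [hnorm, real_inner_smul_left, EuclideanSpace.inner_single_left]

/-- As the screening parameter `λ` tends to `0⁺`, the Fourier transform of the screened
Coulomb potential tends to the Coulomb value `4π/q²`. -/
theorem yukawa_fourier_tendsto_coulomb (q : EuclideanSpace ℝ (Fin 3)) (hq : q ≠ 0) :
    Tendsto (fun l : ℝ =>
        ∫ x : EuclideanSpace ℝ (Fin 3),
          ((Real.exp (-(l * ‖x‖)) / ‖x‖ : ℝ) : ℂ) *
            Complex.exp (-(Complex.I * (⟪q, x⟫ : ℝ))))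
      (nhdsWithin 0 (Set.Ioi 0))
      (nhds ((4 * Real.pi / ‖q‖ ^ 2 : ℝ) : ℂ)) := by
  have hq2 : ‖q‖ ^ 2 ≠ 0 := pow_ne_zero 2 (norm_ne_zero_iff.mpr hq)
  have hcont : ContinuousAt (fun l : ℝ => ((4 * Real.pi / (l ^ 2 + ‖q‖ ^ 2) : ℝ) : ℂ)) 0 := by
    fun_prop (disch := simpa using hq2)
  have hlim := hcont.tendsto.mono_left (nhdsWithin_le_nhds (s := Ioi 0))
  rw [zero_pow two_ne_zero, zero_add] at hlim
  exact hlim.congr' (eventually_nhdsWithin_of_forall fun l (hl : 0 < l) =>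
    (integral_screenedCoulomb_mul_cexp_inner hl q).symm)
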